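/- arXiv:2303.06086 — 4 statements merged into one kernel-verified Lean document; each statement's English description precedes it below -/
import Mathlib

section
/- Let X ⊆ ℝⁿ be a nonempty closed set, a ∈ ℝⁿ, and m(x) the set of closest points of X to x. Then the upper preimage m_*(m(a)) := {x ∈ ℝⁿ : m(a) ⊆ m(x)} is a closed subset of ℝⁿ. -/
open Metric

theorem isClosed_setOf_forall_dist_eq_infDist {α : Type*} [PseudoMetricSpace α] (X S : Set α) :
    IsClosed {x | ∀ y ∈ S, dist y x = infDist x X} := by
  simp only [Set.ofPred_forall]
  exact isClosed_biInter fun y _ =>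
    isClosed_eq (continuous_const.dist continuous_id) (continuous_infDist_pt X)

theorem stmt_11_general (n : ℕ) (X : Set (EuclideanSpace ℝ (Fin n)))
    (m : EuclideanSpace ℝ (Fin n) → Set (EuclideanSpace ℝ (Fin n)))
    (hm : ∀ x, m x = {y ∈ X | dist y x = Metric.infDist x X})
    (a : EuclideanSpace ℝ (Fin n)) :
    IsClosed {x : EuclideanSpace ℝ (Fin n) | m a ⊆ m x} := by
  have hmaX : m a ⊆ X := fun y hy => by rw [hm a] at hy; exact hy.1
  have hset : {x | m a ⊆ m x} = {x | ∀ y ∈ m a, dist y x = infDist x X} := by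
    ext x
    simp only [Set.mem_ofPred_eq, Set.subset_def, hm x]
    exact forall₂_congr fun y hy => and_iff_right (hmaX hy)
  rw [hset]
  exact isClosed_setOf_forall_dist_eq_infDist X (m a)

/-- the upper preimage `m_*(m(a))` is closed. -/
theorem stmt_11 (n : ℕ) (X : Set (EuclideanSpace ℝ (Fin n)))
    (hXne : X.Nonempty) (hXcl : IsClosed X)
    (m : EuclideanSpace ℝ (Fin n) → Set (EuclideanSpace ℝ (Fin n)))
    (hm : ∀ x, m x = {y ∈ X | dist y x = Metric.infDist x X})
    (a : EuclideanSpace ℝ (Fin n)) :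
    IsClosed {x : EuclideanSpace ℝ (Fin n) | m a ⊆ m x} :=
  stmt_11_general n X m hm a
end

section
/- Let X ⊆ ℝⁿ be a nonempty closed set, a ∈ ℝⁿ, and m(x) the set of closest points of X to x. Then the weak preimage m^#(m(a)) := {x ∈ ℝⁿ : m(x) ∩ m(a) ≠ ∅} is a closed subset of ℝⁿ. -/
/-! The graph `{(x, y) | y ∈ m(x)}` of the nearest-point map is closed, since both `dist y x` and
`infDist x X` are continuous; the weak preimage of the compact set `m(a)` is the projection of this
graph intersected with `ℝⁿ × m(a)`, and projecting along a compact factor preserves closedness. -/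

open Metric

theorem IsClosed.setOf_exists_mem_isCompact {X Y : Type*} [TopologicalSpace X]
    [TopologicalSpace Y] {C : Set (X × Y)} (hC : IsClosed C) {K : Set Y} (hK : IsCompact K) :
    IsClosed {x | ∃ y ∈ K, (x, y) ∈ C} := by
  have : CompactSpace K := isCompact_iff_compactSpace.mp hK
  have hC' : IsClosed ((Prod.map id Subtype.val : X × K → X × Y) ⁻¹' C) :=
    hC.preimage (continuous_id.prodMap continuous_subtype_val)
  convert isClosedMap_fst_of_compactSpace _ hC' using 1
  ext x
  simp

section NearestPoints

variable {α : Type*} [PseudoMetricSpace α]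

def nearestPoints (X : Set α) (x : α) : Set α :=
  {y ∈ X | dist y x = infDist x X}

theorem isClosed_setOf_mem_nearestPoints {X : Set α} (hX : IsClosed X) :
    IsClosed {p : α × α | p.2 ∈ nearestPoints X p.1} :=
  (hX.preimage continuous_snd).inter <|
    isClosed_eq (continuous_snd.dist continuous_fst) ((continuous_infDist_pt X).comp continuous_fst)

theorem isCompact_nearestPoints [ProperSpace α] {X : Set α} (hX : IsClosed X) (x : α) :
    IsCompact (nearestPoints X x) :=
  (isCompact_closedBall x (infDist x X)).of_isClosed_subset
    (isClosed_setOf_mem_nearestPoints hX |>.preimage (Continuous.prodMk_right x))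
    fun _ hy => mem_closedBall.2 hy.2.le

theorem isClosed_setOf_nearestPoints_inter_nonempty {X K : Set α} (hX : IsClosed X)
    (hK : IsCompact K) : IsClosed {x | (nearestPoints X x ∩ K).Nonempty} := by
  convert (isClosed_setOf_mem_nearestPoints hX).setOf_exists_mem_isCompact hK using 1
  ext x
  simp only [Set.mem_ofPred_eq, Set.Nonempty, Set.mem_inter_iff, and_comm]

end NearestPoints

theorem stmt_12_general (n : ℕ) (X : Set (EuclideanSpace ℝ (Fin n)))
    (hXcl : IsClosed X)
    (m : EuclideanSpace ℝ (Fin n) → Set (EuclideanSpace ℝ (Fin n)))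
    (hm : ∀ x, m x = {y ∈ X | dist y x = Metric.infDist x X})
    (a : EuclideanSpace ℝ (Fin n)) :
    IsClosed {x : EuclideanSpace ℝ (Fin n) | (m x ∩ m a).Nonempty} := by
  obtain rfl : m = nearestPoints X := funext hm
  exact isClosed_setOf_nearestPoints_inter_nonempty hXcl (isCompact_nearestPoints hXcl a)

/-- the weak preimage `m^#(m(a))` is closed. -/
theorem stmt_12 (n : ℕ) (X : Set (EuclideanSpace ℝ (Fin n)))
    (hXne : X.Nonempty) (hXcl : IsClosed X)
    (m : EuclideanSpace ℝ (Fin n) → Set (EuclideanSpace ℝ (Fin n)))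
    (hm : ∀ x, m x = {y ∈ X | dist y x = Metric.infDist x X})
    (a : EuclideanSpace ℝ (Fin n)) :
    IsClosed {x : EuclideanSpace ℝ (Fin n) | (m x ∩ m a).Nonempty} :=
  stmt_12_general n X hXcl m hm a
end

section
/- Let X = {(0,0)} ∪ {(x, −(x−1)²) : x ∈ [1/2, 1]} ⊆ ℝ², and let N(p) = {y ∈ ℝ² : ‖y − p‖ = d(y,X)} for p ∈ X. Then there exists a sequence of points pᵥ ∈ X \ {(1,0)} with pᵥ → (1,0) such that N(pᵥ) ∩ N((0,0)) ≠ ∅ for all ν, while N((1,0)) ∩ N((0,0)) = ∅. In particular the weak preimage N^#(N((0,0))) = {p ∈ X : N(p) ∩ N((0,0)) ≠ ∅} is not closed in X. -/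
/-!
Write `γ x = (x, -(x - 1)²)` for the parabola carrying the arc. For `x₀ < 1` there is a circle
through the origin that is tangent to the parabola at `γ x₀` and contains no point of the parabola
in its interior: for its centre `y`, the quartic `‖y - γ x‖² - ‖y‖²` has a double root at `x₀` and
a positive quadratic cofactor. Hence `y ∈ N (γ x₀) ∩ N 0`, and `γ x₀ → (1, 0)` as `x₀ → 1`.
On the other hand, a point equidistant from `0` and `(1, 0)` lies on the line `y₀ = 1/2`, and every
such point is strictly closer to `γ (1 - s)` than to `0` for small `s > 0`, since the difference of
squared distances is `s (s - 1 + 2 y₁ s + s³)`.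
-/

open Filter Topology Set

local notation "ℝ²" => EuclideanSpace ℝ (Fin 2)

theorem Metric.infDist_eq_dist_iff {α : Type*} [PseudoMetricSpace α] {s : Set α} {x y : α}
    (hy : y ∈ s) : infDist x s = dist x y ↔ ∀ z ∈ s, dist x y ≤ dist x z :=
  ⟨fun h _ hz => h ▸ infDist_le_dist_of_mem hz,
    fun h => (infDist_le_dist_of_mem hy).antisymm ((le_infDist ⟨y, hy⟩).2 h)⟩

theorem EuclideanSpace.dist_fin_two_sq (y : ℝ²) (a b : ℝ) :
    dist y !₂[a, b] ^ 2 = (y 0 - a) ^ 2 + (y 1 - b) ^ 2 := by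
  rw [EuclideanSpace.dist_eq, Real.sq_sqrt (by positivity), Fin.sum_univ_two]
  simp [Real.dist_eq, sq_abs]

def parabola (x : ℝ) : ℝ² := !₂[x, -(x - 1) ^ 2]

theorem continuous_parabola : Continuous parabola := by
  unfold parabola
  fun_prop

theorem parabola_one : parabola 1 = !₂[1, 0] := by
  simp [parabola]

theorem dist_parabola_sq_sub_dist_origin_sq (e c x : ℝ)
    (hc : c * (e * (2 - e)) = 1 + 2 * e ^ 3) :
    dist !₂[1 + e ^ 3 - c * e, (c - 3 * e ^ 2 - 1) / 2] (parabola x) ^ 2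
      - dist !₂[1 + e ^ 3 - c * e, (c - 3 * e ^ 2 - 1) / 2] !₂[0, 0] ^ 2
      = (1 - x - e) ^ 2 * ((1 - x + e) ^ 2 + (c - e ^ 2)) := by
  rw [parabola, EuclideanSpace.dist_fin_two_sq, EuclideanSpace.dist_fin_two_sq]
  simp only [Matrix.cons_val_zero, Matrix.cons_val_one]
  linear_combination hc

theorem exists_dist_parabola_eq_dist_origin_le {x₀ : ℝ} (hx₀ : x₀ ∈ Ioo (-1) 1) :
    ∃ y : ℝ², dist y (parabola x₀) = dist y !₂[0, 0] ∧
      ∀ x, dist y !₂[0, 0] ≤ dist y (parabola x) := by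
  obtain ⟨e, rfl⟩ : ∃ e, x₀ = 1 - e := ⟨1 - x₀, by ring⟩
  have hpos : 0 < e * (2 - e) := by nlinarith [hx₀.1, hx₀.2]
  obtain ⟨c, hc⟩ : ∃ c, c * (e * (2 - e)) = 1 + 2 * e ^ 3 :=
    ⟨_, div_mul_cancel₀ _ hpos.ne'⟩
  have hce : 0 < c - e ^ 2 := by
    refine pos_of_mul_pos_left (b := e * (2 - e)) ?_ hpos.le
    rw [show (c - e ^ 2) * (e * (2 - e)) = 1 + e ^ 4 by linear_combination hc]
    positivity
  refine ⟨!₂[1 + e ^ 3 - c * e, (c - 3 * e ^ 2 - 1) / 2], ?_, fun x => ?_⟩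
  · rw [← pow_left_inj₀ dist_nonneg dist_nonneg two_ne_zero, ← sub_eq_zero,
      dist_parabola_sq_sub_dist_origin_sq e c _ hc]
    ring
  · rw [← pow_le_pow_iff_left₀ dist_nonneg dist_nonneg two_ne_zero, ← sub_nonneg,
      dist_parabola_sq_sub_dist_origin_sq e c _ hc]
    positivity

theorem exists_dist_parabola_eq_infDist_and_dist_origin_eq_infDist {X : Set ℝ²}
    (h₀ : !₂[0, 0] ∈ X) (hX : X ⊆ insert !₂[0, 0] (range parabola)) {x₀ : ℝ}
    (hx₀ : x₀ ∈ Ioo (-1) 1) :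
    ∃ y : ℝ², dist y (parabola x₀) = Metric.infDist y X ∧
      dist y !₂[0, 0] = Metric.infDist y X := by
  obtain ⟨y, hy_eq, hy_le⟩ := exists_dist_parabola_eq_dist_origin_le hx₀
  have hinf : Metric.infDist y X = dist y !₂[0, 0] := by
    refine (Metric.infDist_eq_dist_iff h₀).2 fun z hz => ?_
    rcases hX hz with rfl | ⟨x, rfl⟩
    exacts [le_rfl, hy_le x]
  exact ⟨y, hy_eq.trans hinf.symm, hinf.symm⟩

theorem fst_eq_half_of_dist_eq {y : ℝ²} (h : dist y !₂[1, 0] = dist y !₂[0, 0]) :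
    y 0 = 1 / 2 := by
  have h_sq := congrArg (· ^ 2) h
  simp only [EuclideanSpace.dist_fin_two_sq] at h_sq
  linarith

theorem exists_parabola_dist_lt_dist_origin {y : ℝ²} (hy : y 0 = 1 / 2) :
    ∃ x ∈ Icc (1 / 2 : ℝ) 1, dist y (parabola x) < dist y !₂[0, 0] := by
  set t := y 1
  obtain ⟨s, hs⟩ : ∃ s, s * (4 * (1 + |t|)) = 1 := ⟨_, inv_mul_cancel₀ (by positivity)⟩
  have ht := abs_nonneg t
  have hs₀ : 0 < s := pos_of_mul_pos_left (hs ▸ one_pos) (by positivity)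
  have hs₄ : s ≤ 1 / 4 := by nlinarith
  have hts : 2 * t * s ≤ 1 / 2 - 2 * s := by nlinarith [le_abs_self t]
  have hs₃ : s ^ 3 ≤ s := by nlinarith [mul_pos hs₀ hs₀]
  have hneg : s - 1 + 2 * t * s + s ^ 3 < 0 := by linarith
  refine ⟨1 - s, ⟨by linarith, by linarith⟩, ?_⟩
  rw [← pow_lt_pow_iff_left₀ dist_nonneg dist_nonneg two_ne_zero, parabola,
    EuclideanSpace.dist_fin_two_sq, EuclideanSpace.dist_fin_two_sq, hy]
  nlinarith [mul_pos hs₀ (neg_pos.2 hneg)]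

theorem dist_ne_infDist_of_dist_origin_eq_infDist {X : Set ℝ²}
    (hX : MapsTo parabola (Icc (1 / 2) 1) X) {y : ℝ²}
    (h₀ : dist y !₂[0, 0] = Metric.infDist y X) : dist y !₂[1, 0] ≠ Metric.infDist y X := by
  intro h₁
  obtain ⟨x, hx, hlt⟩ :=
    exists_parabola_dist_lt_dist_origin (fst_eq_half_of_dist_eq (h₁.trans h₀.symm))
  linarith [Metric.infDist_le_dist_of_mem (x := y) (hX hx)]

/-- counterexample: the weak preimage of `N` need not be closed
in dimension two. -/
theorem stmt_17 (X : Set (EuclideanSpace ℝ (Fin 2)))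
    (hX : X = {(!₂[0, 0] : EuclideanSpace ℝ (Fin 2))} ∪
      {q : EuclideanSpace ℝ (Fin 2) | ∃ x ∈ Set.Icc (1/2 : ℝ) 1,
        q = !₂[x, -(x - 1)^2]})
    (N : EuclideanSpace ℝ (Fin 2) → Set (EuclideanSpace ℝ (Fin 2)))
    (hN : ∀ p, N p = {y : EuclideanSpace ℝ (Fin 2) |
      dist y p = Metric.infDist y X}) :
    (∃ p : ℕ → EuclideanSpace ℝ (Fin 2),
      (∀ ν, p ν ∈ X \ {(!₂[1, 0] : EuclideanSpace ℝ (Fin 2))}) ∧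
      Tendsto p atTop (𝓝 (!₂[1, 0] : EuclideanSpace ℝ (Fin 2))) ∧
      (∀ ν, (N (p ν) ∩ N !₂[0, 0]).Nonempty)) ∧
    N !₂[1, 0] ∩ N !₂[0, 0] = ∅ ∧
    ¬ IsClosed {p : EuclideanSpace ℝ (Fin 2) |
      p ∈ X ∧ (N p ∩ N !₂[0, 0]).Nonempty} := by
  have h₀ : !₂[0, 0] ∈ X := hX ▸ Or.inl rfl
  have h_arc : MapsTo parabola (Icc (1 / 2) 1) X := fun x hx => hX ▸ Or.inr ⟨x, hx, rfl⟩
  have h_sub : X ⊆ insert !₂[0, 0] (range parabola) := by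
    rw [hX]
    rintro _ (rfl | ⟨x, -, rfl⟩)
    exacts [.inl rfl, .inr ⟨x, rfl⟩]
  obtain ⟨u, -, hu, hu_lim⟩ := exists_seq_strictMono_tendsto' (show (1 / 2 : ℝ) < 1 by norm_num)
  have hp_mem : ∀ ν, parabola (u ν) ∈ X \ {!₂[1, 0]} := fun ν =>
    ⟨h_arc (Ioo_subset_Icc_self (hu ν)), fun h => (hu ν).2.ne (by simpa [parabola] using congrArg (· 0) h)⟩
  have hp_lim : Tendsto (parabola ∘ u) atTop (𝓝 !₂[1, 0]) :=
    parabola_one ▸ (continuous_parabola.tendsto 1).comp hu_lim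
  have hp_N : ∀ ν, (N (parabola (u ν)) ∩ N !₂[0, 0]).Nonempty := fun ν => by
    rw [hN, hN]
    exact exists_dist_parabola_eq_infDist_and_dist_origin_eq_infDist h₀ h_sub
      ⟨by linarith [(hu ν).1], (hu ν).2⟩
  have h_empty : N !₂[1, 0] ∩ N !₂[0, 0] = ∅ := by
    rw [hN, hN]
    exact eq_empty_of_forall_notMem fun y ⟨hy₁, hy₀⟩ =>
      dist_ne_infDist_of_dist_origin_eq_infDist h_arc hy₀ hy₁
  refine ⟨⟨parabola ∘ u, hp_mem, hp_lim, hp_N⟩, h_empty, fun hcl => ?_⟩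
  obtain ⟨-, hne⟩ := hcl.mem_of_tendsto hp_lim (.of_forall fun ν => ⟨(hp_mem ν).1, hp_N ν⟩)
  simp [h_empty] at hne
end

section
/- Let X ⊆ ℝ be a nonempty closed set, a ∈ X, and N(x) = {t ∈ ℝ : |t − x| = d(t, X)} for x ∈ X. If (xₙ) ⊆ X is a sequence with N(a) ∩ N(xₙ) ≠ ∅ for all n and xₙ → x₀ for some x₀ ∈ ℝ, then x₀ ∈ X and N(a) ∩ N(x₀) ≠ ∅. In other words, in dimension one the weak preimage N^#(N(a)) is closed in X. -/
/-! On the line, a point at equal distance from two distinct points `a ≠ y` is their midpoint.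
So `N a ∩ N y ≠ ∅` forces the midpoint of `a` and `y` into `N a` (trivially so when `y = a`, as
`a ∈ N a`). Since `N a` is closed, the midpoints of `a` and `xₙ` converge to a point of `N a`:
the midpoint of `a` and `x₀`, which, being equidistant from both, also lies in `N x₀`. -/

open Filter Topology Metric

lemma isClosed_setOf_abs_sub_eq_infDist (X : Set ℝ) (a : ℝ) :
    IsClosed {t : ℝ | |t - a| = infDist t X} :=
  isClosed_eq (by fun_prop) (continuous_infDist_pt X)

lemma abs_add_div_two_sub_eq_infDist {X : Set ℝ} {a y t : ℝ} (ha : a ∈ X)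
    (hta : |t - a| = infDist t X) (hty : |t - y| = infDist t X) :
    |(a + y) / 2 - a| = infDist ((a + y) / 2) X := by
  by_cases hy : y = a
  · subst hy
    simp [infDist_zero_of_mem ha]
  · have ht : t = (a + y) / 2 := by
      rcases abs_eq_abs.mp (hta.trans hty.symm) with h | h
      · exact absurd (by linarith) hy
      · linarith
    rwa [← ht]

theorem stmt_18_general (X : Set ℝ) (hXcl : IsClosed X)
    (a : ℝ) (ha : a ∈ X)
    (N : ℝ → Set ℝ)
    (hN : ∀ x, N x = {t : ℝ | |t - x| = Metric.infDist t X})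
    (x : ℕ → ℝ) (hxX : ∀ k, x k ∈ X)
    (hmeet : ∀ k, (N a ∩ N (x k)).Nonempty)
    (x₀ : ℝ) (hx : Tendsto x atTop (𝓝 x₀)) :
    x₀ ∈ X ∧ (N a ∩ N x₀).Nonempty := by
  set m := (a + x₀) / 2
  have hm : |m - a| = infDist m X := by
    have hmid : Tendsto (fun k => (a + x k) / 2) atTop (𝓝 m) :=
      (tendsto_const_nhds.add hx).div_const 2
    refine (isClosed_setOf_abs_sub_eq_infDist X a).mem_of_tendsto hmid (.of_forall fun k => ?_)
    obtain ⟨t, hta, htx⟩ := hmeet k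
    rw [hN] at hta htx
    exact abs_add_div_two_sub_eq_infDist ha hta htx
  refine ⟨hXcl.mem_of_tendsto hx (.of_forall hxX), m, ?_, ?_⟩ <;> rw [hN]
  · exact hm
  · change |m - x₀| = _
    rwa [show m - x₀ = -(m - a) by ring, abs_neg]

/-- in dimension one the weak preimage `N^#(N(a))` is closed. -/
theorem stmt_18 (X : Set ℝ) (hXne : X.Nonempty) (hXcl : IsClosed X)
    (a : ℝ) (ha : a ∈ X)
    (N : ℝ → Set ℝ)
    (hN : ∀ x, N x = {t : ℝ | |t - x| = Metric.infDist t X})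
    (x : ℕ → ℝ) (hxX : ∀ k, x k ∈ X)
    (hmeet : ∀ k, (N a ∩ N (x k)).Nonempty)
    (x₀ : ℝ) (hx : Tendsto x atTop (𝓝 x₀)) :
    x₀ ∈ X ∧ (N a ∩ N x₀).Nonempty :=
  stmt_18_general X hXcl a ha N hN x hxX hmeet x₀ hx
end
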